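/- arXiv:1511.06954 — 2 statements merged into one kernel-verified Lean document; each statement's English description precedes it below -/
import Mathlib

section
/- At any pure Nash equilibrium p of the additive budgeted game, the PNE base set L is contained in the set of purchased items with positive prices (L ⊆ X_p). -/
open Finset

/-- Total price of a bundle `S`. -/
def price {n : ℕ} (p : Fin n → ℝ) (S : Finset (Fin n)) : ℝ := ∑ i ∈ S, p i

/-- Additive valuation induced by item values. -/
def addVal {n : ℕ} (v : Fin n → ℝ) (S : Finset (Fin n)) : ℝ := ∑ i ∈ S, v i

/-- `S` is a utility-maximizing affordable bundle for the budgeted buyer: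
it is within budget and has utility `v S - p S` at least that of every other
affordable bundle (unaffordable bundles have utility `-∞`). -/
def demandOpt {n : ℕ} (v : Finset (Fin n) → ℝ) (B : ℝ) (p : Fin n → ℝ)
    (S : Finset (Fin n)) : Prop :=
  price p S ≤ B ∧ ∀ T : Finset (Fin n), price p T ≤ B → v T - price p T ≤ v S - price p S

/-- Seller `i`'s utility: the posted price if the item is bought, else `0`. -/
def sellerUtil {n : ℕ} (p : Fin n → ℝ) (S : Finset (Fin n)) (i : Fin n) : ℝ :=
  if i ∈ S then p i else 0

/-- `p` is a pure Nash equilibrium of the pricing game with buyer-choice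
function `X`: no seller can strictly gain by unilaterally changing
her (nonnegative) price. -/
def isPNE {n : ℕ} (v : Finset (Fin n) → ℝ) (B : ℝ)
    (X : (Fin n → ℝ) → Finset (Fin n)) (p : Fin n → ℝ) : Prop :=
  ∀ i : Fin n, ∀ q : ℝ, 0 ≤ q →
    sellerUtil (Function.update p i q) (X (Function.update p i q)) i ≤
      sellerUtil p (X p) i

private lemma price_update_of_notMem {n : ℕ} (p : Fin n → ℝ) (i : Fin n) (q : ℝ)
    (U : Finset (Fin n)) (h : i ∉ U) :
    price (Function.update p i q) U = price p U :=
  Finset.sum_congr rfl fun j hj => Function.update_of_ne (by rintro rfl; exact h hj) q p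

private lemma price_update_insert {n : ℕ} (p : Fin n → ℝ) (i : Fin n) (q : ℝ)
    (U : Finset (Fin n)) (h : i ∉ U) :
    price (Function.update p i q) (insert i U) = q + price p U := by
  unfold price
  rw [Finset.sum_insert h, Function.update_self]
  congr 1
  exact price_update_of_notMem p i q U h

private lemma addVal_insert {n : ℕ} (v : Fin n → ℝ) (i : Fin n)
    (U : Finset (Fin n)) (h : i ∉ U) :
    addVal v (insert i U) = v i + addVal v U :=
  Finset.sum_insert h

/-- Lemma 5: at any PNE of the additive budgeted game, the greedy PNE base set
`L = {0, …, k-1}` is contained in the bought set, with all its items at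
positive prices. -/
theorem stmt9 (n : ℕ) (v : Fin n → ℝ) (B : ℝ) (hB : 0 < B)
    (hv : ∀ i, 0 < v i) (hsorted : ∀ i j : Fin n, i ≤ j → v j ≤ v i)
    (hsum : B < ∑ i, v i)
    (k : ℕ) (hk1 : 1 ≤ k) (hkn : k ≤ n)
    (L : Finset (Fin n)) (hL : L = Finset.univ.filter (fun i => i.val < k))
    (hgrow : ∀ i : Fin n, 0 < i.val → i.val < k →
      (∑ j ∈ Finset.univ.filter (fun j : Fin n => j.val < i.val), v j - B) / (i.val : ℝ) < v i)
    (hstop : ∀ i : Fin n, i.val = k → v i ≤ (∑ j ∈ L, v j - B) / (k : ℝ))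
    (p : Fin n → ℝ) (hpnn : ∀ i, 0 ≤ p i)
    (X : (Fin n → ℝ) → Finset (Fin n))
    (hX : ∀ q, demandOpt (addVal v) B q (X q))
    (hPNE : isPNE (addVal v) B X p) :
    ∀ i ∈ L, 0 < p i ∧ i ∈ X p := by
  classical
  intro i hiL
  have hik : i.val < k := by
    rw [hL] at hiL; exact (Finset.mem_filter.mp hiL).2
  -- Reduce to: seller i has a profitable positive-price deviation that gets bought.
  suffices h : ∃ q : ℝ, 0 < q ∧ i ∈ X (Function.update p i q) by
    obtain ⟨q, hq, hiX⟩ := h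
    have hle := hPNE i q hq.le
    rw [sellerUtil, if_pos hiX, Function.update_self] at hle
    by_cases hXp : i ∈ X p
    · rw [sellerUtil, if_pos hXp] at hle
      exact ⟨lt_of_lt_of_le hq hle, hXp⟩
    · rw [sellerUtil, if_neg hXp] at hle
      linarith
  -- the family of affordable bundles avoiding i
  set 𝒯 : Finset (Finset (Fin n)) :=
    Finset.univ.powerset.filter (fun T : Finset (Fin n) => i ∉ T ∧ price p T ≤ B) with h𝒯
  have hne : 𝒯.Nonempty := ⟨∅, by simp [h𝒯, price, hB.le]⟩
  obtain ⟨T, hT𝒯, hTmax⟩ := 𝒯.exists_max_image (fun T => addVal v T - price p T) hne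
  have hTmem : i ∉ T ∧ price p T ≤ B := (Finset.mem_filter.mp hT𝒯).2
  obtain ⟨hiT, hTB⟩ := hTmem
  -- main construction: a deviation price q and a bundle strictly better than any i-free one
  have main : ∃ q : ℝ, 0 < q ∧ ∃ W : Finset (Fin n),
      price (Function.update p i q) W ≤ B ∧
      addVal v T - price p T < addVal v W - price (Function.update p i q) W := by
    rcases lt_or_eq_of_le hTB with hlt | heq
    · -- slack in the budget: just add i at a small price
      have hmin : 0 < min (v i) (B - price p T) := lt_min (hv i) (by linarith)
      refine ⟨min (v i) (B - price p T) / 2, by linarith, insert i T, ?_, ?_⟩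
      · rw [price_update_insert p i _ T hiT]
        have := min_le_right (v i) (B - price p T)
        linarith
      · rw [price_update_insert p i _ T hiT, addVal_insert v i T hiT]
        have := min_le_left (v i) (B - price p T)
        linarith
    · -- budget exhausted: find an item to swap out
      have hcrux : ∃ j ∈ T, 0 < p j ∧ v j - p j < v i := by
        by_contra hcon
        push_neg at hcon
        -- all positively-priced items in T are strictly more valuable than i
        set S := T.filter (fun j => 0 < p j) with hS
        have hsum1 : price p T = ∑ j ∈ S, p j := by
          rw [hS]
          refine (Finset.sum_filter_of_ne ?_).symm
          intro j hj hne0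
          exact lt_of_le_of_ne (hpnn j) (Ne.symm hne0)
        set F := Finset.univ.filter (fun j : Fin n => j.val < i.val) with hF
        have hSF : S ⊆ F := by
          intro j hj
          rw [hS, Finset.mem_filter] at hj
          obtain ⟨hjT, hpj⟩ := hj
          have h1 : v i ≤ v j - p j := hcon j hjT hpj
          rw [hF, Finset.mem_filter]
          refine ⟨Finset.mem_univ _, ?_⟩
          by_contra hji
          push_neg at hji
          have : v j ≤ v i := hsorted i j (Fin.le_def.mpr hji)
          linarith
        have hterm : ∀ j ∈ S, p j ≤ v j - v i := by
          intro j hj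
          rw [hS, Finset.mem_filter] at hj
          have := hcon j hj.1 hj.2
          linarith
        have hFnn : ∀ j ∈ F, (0:ℝ) ≤ v j - v i := by
          intro j hj
          rw [hF, Finset.mem_filter] at hj
          have : v i ≤ v j := hsorted j i (Fin.le_def.mpr hj.2.le)
          linarith
        have hchain : B ≤ ∑ j ∈ F, (v j - v i) := by
          calc B = ∑ j ∈ S, p j := by rw [← hsum1, heq]
            _ ≤ ∑ j ∈ S, (v j - v i) := Finset.sum_le_sum hterm
            _ ≤ ∑ j ∈ F, (v j - v i) := Finset.sum_le_sum_of_subset_of_nonneg hSF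
                (fun j hj _ => hFnn j hj)
        have hFcard : F.card = i.val := by
          have : F = Finset.Iio i := by
            rw [hF]
            ext j
            simp only [Finset.mem_filter, Finset.mem_Iio, Finset.mem_univ, true_and, Fin.lt_def]
          rw [this, Fin.card_Iio]
        have hFsum : ∑ j ∈ F, (v j - v i) = ∑ j ∈ F, v j - (i.val : ℝ) * v i := by
          rw [Finset.sum_sub_distrib, Finset.sum_const, hFcard, nsmul_eq_mul]
        rcases Nat.eq_zero_or_pos i.val with hi0 | hipos
        · -- i is the first item: F is empty, so B ≤ 0, contradiction
          have hFempty : F = ∅ := by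
            refine Finset.eq_empty_of_forall_notMem fun j hj => ?_
            rw [hF, Finset.mem_filter] at hj
            omega
          rw [hFempty] at hchain
          simp at hchain
          linarith
        · have hg := hgrow i hipos hik
          rw [div_lt_iff₀ (by exact_mod_cast hipos : (0:ℝ) < (i.val : ℝ))] at hg
          rw [hF] at hFsum
          rw [hF] at hchain
          rw [hFsum] at hchain
          nlinarith [hg]
      obtain ⟨j, hjT, hpj, hvj⟩ := hcrux
      have hji : j ≠ i := fun e => hiT (e ▸ hjT)
      have hiTe : i ∉ T.erase j := fun h => hiT (Finset.mem_of_mem_erase h)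
      have hmin : 0 < min (p j) (v i - (v j - p j)) := lt_min hpj (by linarith)
      refine ⟨min (p j) (v i - (v j - p j)) / 2, by linarith, insert i (T.erase j), ?_, ?_⟩
      · rw [price_update_insert p i _ _ hiTe]
        have herase : price p (T.erase j) = price p T - p j :=
          Finset.sum_erase_eq_sub hjT
        have := min_le_left (p j) (v i - (v j - p j))
        rw [herase]
        linarith
      · rw [price_update_insert p i _ _ hiTe, addVal_insert v i _ hiTe]
        have herase : price p (T.erase j) = price p T - p j :=
          Finset.sum_erase_eq_sub hjT
        have hverase : addVal v (T.erase j) = addVal v T - v j :=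
          Finset.sum_erase_eq_sub hjT
        have := min_le_right (p j) (v i - (v j - p j))
        rw [herase, hverase]
        linarith
  obtain ⟨q, hq, W, hWB, hWgt⟩ := main
  refine ⟨q, hq, ?_⟩
  by_contra hiX
  have hd := hX (Function.update p i q)
  have h1 := hd.2 W hWB
  have h2 : price p (X (Function.update p i q)) ≤ B := by
    rw [← price_update_of_notMem p i q _ hiX]; exact hd.1
  have h3 : X (Function.update p i q) ∈ 𝒯 := by
    rw [h𝒯, Finset.mem_filter]
    exact ⟨Finset.mem_powerset.mpr (Finset.subset_univ _), hiX, h2⟩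
  have h4 := hTmax _ h3
  rw [price_update_of_notMem p i q _ hiX] at h1
  linarith
end

section
/- For a monotone submodular valuation, at any pure Nash equilibrium p in which all items are bought and every seller has positive utility, the marginal utilities are equalized: v(N)−v(N\{k})−p_k = v(N)−v(N\{j})−p_j for all k, j. -/
open Finset

lemma price_update_not_mem {n : ℕ} (p : Fin n → ℝ) (k : Fin n) (q : ℝ)
    (S : Finset (Fin n)) (hk : k ∉ S) :
    price (Function.update p k q) S = price p S := by
  refine Finset.sum_congr rfl fun i hi => ?_
  exact Function.update_of_ne (by rintro rfl; exact hk hi) _ _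

lemma price_erase {n : ℕ} (p : Fin n → ℝ) (i : Fin n) (S : Finset (Fin n))
    (hi : i ∈ S) : price p (S.erase i) = price p S - p i := by
  have := Finset.sum_erase_add S p hi
  unfold price; linarith

lemma price_update_mem {n : ℕ} (p : Fin n → ℝ) (k : Fin n) (q : ℝ)
    (S : Finset (Fin n)) (hk : k ∈ S) :
    price (Function.update p k q) S = q + price p (S.erase k) := by
  have h1 := Finset.sum_erase_add S (Function.update p k q) hk
  have h2 : price (Function.update p k q) (S.erase k) = price p (S.erase k) :=
    price_update_not_mem p k q _ (Finset.notMem_erase _ _)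
  unfold price at *
  rw [Function.update_self] at h1
  linarith

/-- Theorem 5: for a monotone submodular valuation, at any PNE in which all
items are bought at positive prices, the marginal utilities
`v(N) - v(N \ {i}) - p i` are equalized across sellers. -/
theorem stmt15 (n : ℕ) (hn : 2 ≤ n) (v : Finset (Fin n) → ℝ) (B : ℝ) (hB : 0 < B)
    (h0 : v ∅ = 0) (hnn : ∀ S, 0 ≤ v S)
    (hmono : ∀ S T : Finset (Fin n), S ⊆ T → v S ≤ v T)
    (hsub : ∀ S T : Finset (Fin n), v (S ∪ T) + v (S ∩ T) ≤ v S + v T)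
    (p : Fin n → ℝ) (hppos : ∀ i, 0 < p i)
    (X : (Fin n → ℝ) → Finset (Fin n))
    (hX : ∀ q, demandOpt v B q (X q))
    (hPNE : isPNE v B X p)
    (hclear : X p = Finset.univ) :
    ∀ k j : Fin n,
      v Finset.univ - v (Finset.univ.erase k) - p k =
        v Finset.univ - v (Finset.univ.erase j) - p j := by
  have hNe : (Finset.univ : Finset (Fin n)).Nonempty := ⟨⟨0, by omega⟩, Finset.mem_univ _⟩
  set P := price p Finset.univ with hPdef
  have hPB : P ≤ B := by have := (hX p).1; rwa [hclear] at this
  have hopt : ∀ T : Finset (Fin n), price p T ≤ B →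
      v T - price p T ≤ v Finset.univ - P := by
    have := (hX p).2; rwa [hclear] at this
  -- marginals are nonnegative
  have hmarg : ∀ i : Fin n, 0 ≤ v Finset.univ - v (Finset.univ.erase i) - p i := by
    intro i
    have he : price p (Finset.univ.erase i) = P - p i :=
      price_erase p i _ (Finset.mem_univ i)
    have haff : price p (Finset.univ.erase i) ≤ B := by
      rw [he]; have := hppos i; linarith
    have := hopt _ haff
    rw [he] at this; linarith
  -- key inequality
  have key : ∀ k j : Fin n, k ≠ j →
      v Finset.univ - v (Finset.univ.erase k) - p k ≤
        v Finset.univ - v (Finset.univ.erase j) - p j := by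
    intro k j hkj
    by_contra hlt
    push_neg at hlt
    set mk := v Finset.univ - v (Finset.univ.erase k) - p k with hmk
    set mj := v Finset.univ - v (Finset.univ.erase j) - p j with hmj
    set δ := Finset.univ.inf' hNe p with hδ
    have hδle : ∀ l : Fin n, δ ≤ p l := fun l => Finset.inf'_le _ (Finset.mem_univ l)
    have hδpos : 0 < δ := by
      rw [hδ, Finset.lt_inf'_iff]; exact fun l _ => hppos l
    set ε := min (mk - mj) δ / 2 with hε
    have hε0 : 0 < ε := by
      have : 0 < min (mk - mj) δ := lt_min (by linarith) hδpos
      positivity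
    have hε1 : ε < mk - mj := by
      have h1 : min (mk - mj) δ ≤ mk - mj := min_le_left _ _
      have : 0 < min (mk - mj) δ := lt_min (by linarith) hδpos
      rw [hε]; linarith
    have hε2 : ε < δ := by
      have h1 : min (mk - mj) δ ≤ δ := min_le_right _ _
      have : 0 < min (mk - mj) δ := lt_min (by linarith) hδpos
      rw [hε]; linarith
    set q := p k + ε with hq
    set p' := Function.update p k q with hp'
    set X' := X p' with hX'
    -- k is not in the new demand
    have hkX' : k ∉ X' := by
      intro hk
      have h1 := hPNE k q (by have := hppos k; linarith)
      rw [hclear] at h1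
      unfold sellerUtil at h1
      rw [if_pos (Finset.mem_univ k), if_pos hk] at h1
      have h2 : p' k = p k + ε := by rw [hp', Function.update_self]
      linarith
    have hX'aff := (hX p').1
    have hX'opt := (hX p').2
    rw [← hX'] at hX'aff hX'opt
    have hX'sub : X' ⊆ Finset.univ.erase k := fun i hi =>
      Finset.mem_erase.2 ⟨by rintro rfl; exact hkX' hi, Finset.mem_univ i⟩
    have hpX' : price p' X' = price p X' := price_update_not_mem p k q X' hkX'
    by_cases hcase : X' = Finset.univ.erase k
    · -- case A: swap j for k
      have hkT : k ∈ Finset.univ.erase j := Finset.mem_erase.2 ⟨hkj, Finset.mem_univ k⟩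
      have hTprice : price p' (Finset.univ.erase j) = q + (P - p j - p k) := by
        rw [price_update_mem p k q _ hkT]
        rw [price_erase p k _ (Finset.mem_erase.2 ⟨hkj, Finset.mem_univ k⟩)]
        rw [price_erase p j _ (Finset.mem_univ j)]
      have haff : price p' (Finset.univ.erase j) ≤ B := by
        rw [hTprice, hq]
        have := hδle j; linarith
      have := hX'opt _ haff
      rw [hTprice, hpX', hcase, price_erase p k _ (Finset.mem_univ k)] at this
      rw [hq] at this
      rw [hmk, hmj] at hε1
      linarith
    · -- case B: add k
      have hss : X' ⊂ Finset.univ.erase k := ssubset_of_subset_of_ne hX'sub hcase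
      obtain ⟨l, hlmem, hlX'⟩ := Finset.exists_of_ssubset hss
      have hlk : l ≠ k := (Finset.mem_erase.1 hlmem).1
      -- price of insert k X'
      have hkins : k ∈ insert k X' := Finset.mem_insert_self k X'
      have hinsP : price p' (insert k X') = q + price p X' := by
        rw [price_update_mem p k q _ hkins, Finset.erase_insert hkX']
      have hX'le : price p X' ≤ P - p k - p l := by
        have hsub2 : X' ⊆ (Finset.univ.erase k).erase l := fun i hi =>
          Finset.mem_erase.2 ⟨by rintro rfl; exact hlX' hi, hX'sub hi⟩
        have hle : price p X' ≤ price p ((Finset.univ.erase k).erase l) :=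
          Finset.sum_le_sum_of_subset_of_nonneg hsub2 (fun i _ _ => (hppos i).le)
        rw [price_erase p l _ hlmem, price_erase p k _ (Finset.mem_univ k)] at hle
        linarith
      have haff : price p' (insert k X') ≤ B := by
        rw [hinsP, hq]
        have := hδle l; linarith
      have hub := hX'opt _ haff
      rw [hinsP, hpX', hq] at hub
      -- submodularity
      have hun : Finset.univ.erase k ∪ insert k X' = Finset.univ := by
        apply Finset.eq_univ_iff_forall.2
        intro i
        by_cases hik : i = k
        · exact Finset.mem_union_right _ (hik ▸ Finset.mem_insert_self k X')
        · exact Finset.mem_union_left _ (Finset.mem_erase.2 ⟨hik, Finset.mem_univ i⟩)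
      have hint : Finset.univ.erase k ∩ insert k X' = X' := by
        ext i
        simp only [Finset.mem_inter, Finset.mem_erase, Finset.mem_insert, Finset.mem_univ,
          and_true]
        constructor
        · rintro ⟨hik, hik2 | hiX'⟩
          · exact absurd hik2 hik
          · exact hiX'
        · intro hi
          exact ⟨by rintro rfl; exact hkX' hi, Or.inr hi⟩
      have hsb := hsub (Finset.univ.erase k) (insert k X')
      rw [hun, hint] at hsb
      have hmj0 := hmarg j
      rw [hmk, hmj] at hε1
      linarith
  intro k j
  rcases eq_or_ne k j with rfl | h
  · rfl
  · exact le_antisymm (key k j h) (key j k h.symm)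
end
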